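/- Suppose a nontrivial group Γ acts harmonically on a tree T (a graph of genus 0). Then the ramification number R of the quotient map T → T/Γ satisfies 0 < R < 2, the order of Γ equals 2/(2 − R), and there is exactly one branch point y in T/Γ, with either r_y = w_y = 1 (in which case |Γ| = 2) or r_y = |Γ| ≥ 2 and w_y = 0. -/

import Mathlib

open scoped Classical

/-- A finite connected multigraph without loop edges. -/
structure Multigraph where
  V : Type
  E : Type
  [fintypeV : Fintype V]
  [fintypeE : Fintype E]
  ends : E → Sym2 V
  loopless : ∀ e : E, ¬ (ends e).IsDiag
  connected : (SimpleGraph.fromRel fun x y : V => ∃ e : E, ends e = s(x, y)).Connected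

attribute [instance] Multigraph.fintypeV Multigraph.fintypeE

namespace Multigraph

/-- The genus (first Betti number, cyclomatic number) of a multigraph. -/
def genus (G : Multigraph) : ℤ :=
  (Fintype.card G.E : ℤ) - (Fintype.card G.V : ℤ) + 1

/-- A cycle in a multigraph, given as a nonempty set of edges such that every vertex is
incident to either 0 or 2 of its edges. -/
def IsCycleSet (G : Multigraph) (C : Set G.E) : Prop :=
  C.Nonempty ∧ ∀ x : G.V,
    Nat.card {e : G.E // e ∈ C ∧ x ∈ G.ends e} = 0 ∨
    Nat.card {e : G.E // e ∈ C ∧ x ∈ G.ends e} = 2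

end Multigraph

/-- A morphism of multigraphs: vertices go to vertices, and each edge goes either to an
edge joining the images of its endpoints, or to the common image of its endpoints
(in which case the edge is *vertical*). -/
structure Morphism (G G' : Multigraph) where
  vmap : G.V → G'.V
  emap : G.E → G'.E ⊕ G'.V
  compat : ∀ e : G.E,
    (∀ e', emap e = Sum.inl e' → G'.ends e' = (G.ends e).map vmap) ∧
    (∀ v, emap e = Sum.inr v → (G.ends e).map vmap = Sym2.diag v)

namespace Morphism

/-- A morphism is harmonic if for every vertex `x`, the number of edges incident to `x`
mapping to a given edge `e'` incident to `φ(x)` is independent of the choice of `e'`. -/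
def Harmonic {G G' : Multigraph} (φ : Morphism G G') : Prop :=
  ∀ (x : G.V) (e₁ e₂ : G'.E), φ.vmap x ∈ G'.ends e₁ → φ.vmap x ∈ G'.ends e₂ →
    Nat.card {e : G.E // x ∈ G.ends e ∧ φ.emap e = Sum.inl e₁} =
    Nat.card {e : G.E // x ∈ G.ends e ∧ φ.emap e = Sum.inl e₂}

/-- A morphism is nonconstant if its image is not a single vertex. -/
def Nonconstant {G G' : Multigraph} (φ : Morphism G G') : Prop :=
  ∃ x y : G.V, φ.vmap x ≠ φ.vmap y

/-- Composition of morphisms of multigraphs. -/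
def comp {G₁ G₂ G₃ : Multigraph} (ψ : Morphism G₂ G₃) (φ : Morphism G₁ G₂) :
    Morphism G₁ G₃ where
  vmap := ψ.vmap ∘ φ.vmap
  emap e := Sum.elim ψ.emap (fun v => Sum.inr (ψ.vmap v)) (φ.emap e)
  compat e := by
    constructor
    · intro e'' h
      rcases hφ : φ.emap e with e' | v
      · simp only [hφ, Sum.elim_inl] at h
        have h1 := (φ.compat e).1 e' hφ
        have h2 := (ψ.compat e').1 e'' h
        rw [h2, h1, Sym2.map_map]
      · simp only [hφ, Sum.elim_inr] at h
        simp at h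
    · intro v h
      rcases hφ : φ.emap e with e' | v₀
      · simp only [hφ, Sum.elim_inl] at h
        have h1 := (φ.compat e).1 e' hφ
        have h2 := (ψ.compat e').2 v h
        rw [← Sym2.map_map, ← h1]
        exact h2
      · simp only [hφ, Sum.elim_inr, Sum.inr.injEq] at h
        have h1 := (φ.compat e).2 v₀ hφ
        subst h
        rw [← Sym2.map_map, h1]
        rfl
end Morphism

/-- A group of automorphisms of a multigraph `G` (a faithful action of `Γ` on `G` by
automorphisms, i.e. a subgroup of `Aut(G)`). -/
structure GraphAction (Γ : Type) [Group Γ] (G : Multigraph) where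
  actV : Γ →* Equiv.Perm G.V
  actE : Γ →* Equiv.Perm G.E
  ends_map : ∀ (γ : Γ) (e : G.E), G.ends (actE γ e) = (G.ends e).map (actV γ)
  faithful : ∀ γ : Γ, (∀ x : G.V, actV γ x = x) → (∀ e : G.E, actE γ e = e) → γ = 1

namespace GraphAction

variable {Γ : Type} [Group Γ] {G : Multigraph}

/-- Two vertices lie in the same `Δ`-orbit. -/
def vrel (A : GraphAction Γ G) (Δ : Subgroup Γ) (x y : G.V) : Prop :=
  ∃ δ ∈ Δ, A.actV δ x = y

/-- Two edges lie in the same `Δ`-orbit. -/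
def erel (A : GraphAction Γ G) (Δ : Subgroup Γ) (e f : G.E) : Prop :=
  ∃ δ ∈ Δ, A.actE δ e = f

/-- The setoid of `Δ`-orbits of vertices. -/
def vSetoid (A : GraphAction Γ G) (Δ : Subgroup Γ) : Setoid G.V where
  r := A.vrel Δ
  iseqv := by
    constructor
    · intro x; exact ⟨1, Δ.one_mem, by simp⟩
    · rintro x y ⟨δ, hδ, h⟩
      refine ⟨δ⁻¹, Δ.inv_mem hδ, ?_⟩
      rw [map_inv, ← h]
      exact Equiv.symm_apply_apply _ _
    · rintro x y z ⟨δ₁, h1, e1⟩ ⟨δ₂, h2, e2⟩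
      refine ⟨δ₂ * δ₁, Δ.mul_mem h2 h1, ?_⟩
      rw [map_mul]
      simp [Equiv.Perm.mul_apply, e1, e2]

/-- The setoid of `Δ`-orbits of edges. -/
def eSetoid (A : GraphAction Γ G) (Δ : Subgroup Γ) : Setoid G.E where
  r := A.erel Δ
  iseqv := by
    constructor
    · intro e; exact ⟨1, Δ.one_mem, by simp⟩
    · rintro e f ⟨δ, hδ, h⟩
      refine ⟨δ⁻¹, Δ.inv_mem hδ, ?_⟩
      rw [map_inv, ← h]
      exact Equiv.symm_apply_apply _ _
    · rintro e f k ⟨δ₁, h1, e1⟩ ⟨δ₂, h2, e2⟩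
      refine ⟨δ₂ * δ₁, Δ.mul_mem h2 h1, ?_⟩
      rw [map_mul]
      simp [Equiv.Perm.mul_apply, e1, e2]

/-- An edge is `Δ`-vertical if its two endpoints lie in the same `Δ`-orbit (so it is
contracted by the quotient morphism `G → G/Δ`). -/
def Vertical (A : GraphAction Γ G) (Δ : Subgroup Γ) (e : G.E) : Prop :=
  ∃ x y : G.V, G.ends e = s(x, y) ∧ A.vrel Δ x y

/-- The vertex set of the quotient graph `G/Δ`: the `Δ`-orbits of vertices. -/
abbrev quotV (A : GraphAction Γ G) (Δ : Subgroup Γ) : Type :=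
  Quotient (A.vSetoid Δ)

/-- The edge set of the quotient graph `G/Δ`: the `Δ`-orbits of non-vertical edges. -/
abbrev quotE (A : GraphAction Γ G) (Δ : Subgroup Γ) : Type :=
  Quotient ((A.eSetoid Δ).comap (Subtype.val : {e : G.E // ¬ A.Vertical Δ e} → G.E))

/-- The genus of the quotient graph `G/Δ`. -/
noncomputable def quotGenus (A : GraphAction Γ G) (Δ : Subgroup Γ) : ℤ :=
  (Nat.card (A.quotE Δ) : ℤ) - (Nat.card (A.quotV Δ) : ℤ) + 1

/-- The order of the stabilizer `Δ_x` of a vertex `x`. -/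
noncomputable def stabOrder (A : GraphAction Γ G) (Δ : Subgroup Γ) (x : G.V) : ℕ :=
  Nat.card {γ : Γ // γ ∈ Δ ∧ A.actV γ x = x}

/-- The vertical multiplicity of a vertex `x`: the number of `Δ`-vertical edges
incident to `x`. -/
noncomputable def vertMult (A : GraphAction Γ G) (Δ : Subgroup Γ) (x : G.V) : ℕ :=
  Nat.card {e : G.E // x ∈ G.ends e ∧ A.Vertical Δ e}

/-- `r_y = |Δ_x|` for a vertex `y` of the quotient `G/Δ` and any `x` in the fiber over `y`. -/
noncomputable def r (A : GraphAction Γ G) (Δ : Subgroup Γ) (y : A.quotV Δ) : ℕ :=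
  A.stabOrder Δ (Quotient.out y)

/-- `w_y = v(x)/|Δ_x|` for a vertex `y` of the quotient `G/Δ` and any `x` in the fiber. -/
noncomputable def w (A : GraphAction Γ G) (Δ : Subgroup Γ) (y : A.quotV Δ) : ℕ :=
  A.vertMult Δ (Quotient.out y) / A.r Δ y

/-- The ramification number `R = Σ_y [2(1 - 1/r_y) + w_y]` of the quotient map `G → G/Δ`. -/
noncomputable def ram (A : GraphAction Γ G) (Δ : Subgroup Γ) : ℚ :=
  ∑ᶠ y : A.quotV Δ, (2 * (1 - 1 / (A.r Δ y : ℚ)) + (A.w Δ y : ℚ))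

/-- A vertex `y` of the quotient `G/Δ` is a branch point if `2(1 - 1/r_y) + w_y > 0`. -/
def IsBranch (A : GraphAction Γ G) (Δ : Subgroup Γ) (y : A.quotV Δ) : Prop :=
  0 < 2 * (1 - 1 / (A.r Δ y : ℚ)) + (A.w Δ y : ℚ)

/-- The quotient morphism `φ_Δ : G → G/Δ` is harmonic: for every vertex `x` of `G` and
every pair of quotient edges incident to the image of `x`, the numbers of preimages
incident to `x` agree. -/
def QuotHarmonic (A : GraphAction Γ G) (Δ : Subgroup Γ) : Prop :=
  ∀ (x : G.V) (e₁ e₂ : G.E), ¬ A.Vertical Δ e₁ → ¬ A.Vertical Δ e₂ →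
    (∃ v ∈ G.ends e₁, A.vrel Δ x v) → (∃ v ∈ G.ends e₂, A.vrel Δ x v) →
    Nat.card {e : G.E // x ∈ G.ends e ∧ A.erel Δ e e₁} =
    Nat.card {e : G.E // x ∈ G.ends e ∧ A.erel Δ e e₂}

/-- The quotient morphism `φ_Δ : G → G/Δ` is non-degenerate: no neighborhood `x(1)` is
contracted to a vertex, i.e. every vertex has a neighbor outside its `Δ`-orbit. -/
def QuotNondeg (A : GraphAction Γ G) (Δ : Subgroup Γ) : Prop :=
  ∀ x : G.V, ∃ e : G.E, x ∈ G.ends e ∧ ∃ y ∈ G.ends e, ¬ A.vrel Δ x y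

/-- `Γ` acts harmonically on `G` if for every subgroup `Δ ≤ Γ` the quotient morphism
`φ_Δ : G → G/Δ` is harmonic and non-degenerate. -/
def ActsHarmonically (A : GraphAction Γ G) : Prop :=
  ∀ Δ : Subgroup Γ, A.QuotHarmonic Δ ∧ A.QuotNondeg Δ

/-- The quotient map `G → G/Δ` is horizontally unramified: all vertex stabilizers in `Δ`
are trivial. -/
def HorizUnramified (A : GraphAction Γ G) (Δ : Subgroup Γ) : Prop :=
  ∀ (x : G.V) (γ : Γ), γ ∈ Δ → A.actV γ x = x → γ = 1

end GraphAction

/-- `M g` is the maximal order of a group acting harmonically on a graph of genus `g`. -/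
noncomputable def M (g : ℕ) : ℕ :=
  sSup {n : ℕ | ∃ (Γ : Type) (i : Group Γ) (G : Multigraph) (A : @GraphAction Γ i G),
    @GraphAction.ActsHarmonically Γ i G A ∧ G.genus = (g : ℤ) ∧ Nat.card Γ = n}

/-!
Harmonicity makes the action rigid: if `γ` fixes a vertex `x` and an edge `f` at `x`, then in
`G/⟨γ⟩` the orbit of `f` meets the edges at `x` only in `f`, so harmonicity forces `γ` to fix
every edge at `x`; by connectedness `γ` fixes all of `G`, hence `γ = 1`. Consequently `Δ` acts
freely on the non-vertical edges, and each stabilizer `Δ_x` acts freely on the vertical edges at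
`x`, so `r_y ∣ v(x)` and `w_y` is an integer. Counting orbits then gives the Riemann–Hurwitz
formula `2g(G) - 2 = |Δ| (2g(G/Δ) - 2 + R)`. For a tree, `g(G/Δ) ≥ 0` and `R ≥ 0` force
`g(G/Δ) = 0` and `R = 2 - 2/|Δ|`. Every term `2(1 - 1/r_y) + w_y` is `0` or at least `1`, so
exactly one is nonzero, and solving `2(1 - 1/r) + w = 2 - 2/|Γ|` gives the two cases.
-/

section Arithmetic

theorem two_mul_one_sub_one_div_add_eq_zero_or_one_le (r w : ℕ) :
    2 * (1 - 1 / (r : ℚ)) + w = 0 ∨ 1 ≤ 2 * (1 - 1 / (r : ℚ)) + w := by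
  have hw : (0 : ℚ) ≤ w := w.cast_nonneg
  rcases Nat.lt_or_ge r 2 with hr | hr
  · interval_cases r
    · right; simp; linarith
    · rcases Nat.eq_zero_or_pos w with rfl | hw
      · simp
      · right; simpa using (Nat.one_le_cast (α := ℚ)).mpr hw
  · right
    have : 1 / (r : ℚ) ≤ 1 / 2 := one_div_le_one_div_of_le two_pos (by exact_mod_cast hr)
    linarith

theorem eq_of_two_mul_one_sub_one_div_add_eq_two_sub_two_div {r w n : ℕ} (hn : 2 ≤ n)
    (h : 2 * (1 - 1 / (r : ℚ)) + w = 2 - 2 / n) :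
    (r = 1 ∧ w = 1 ∧ n = 2) ∨ (r = n ∧ 2 ≤ r ∧ w = 0) := by
  have hnQ : (2 : ℚ) ≤ n := by exact_mod_cast hn
  have h2n : 0 < 2 / (n : ℚ) ∧ 2 / (n : ℚ) ≤ 1 :=
    ⟨by positivity, (div_le_one (by positivity)).mpr hnQ⟩
  have hw : (0 : ℚ) ≤ w := w.cast_nonneg
  rcases Nat.lt_or_ge r 2 with hr | hr
  · interval_cases r
    · simp at h; linarith
    · left
      simp only [Nat.cast_one, div_one, sub_self, mul_zero, zero_add] at h
      have hw1 : w = 1 := by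
        have : 1 ≤ w := by exact_mod_cast (by linarith : (1 : ℚ) ≤ w)
        have : w < 2 := by exact_mod_cast (by linarith : (w : ℚ) < 2)
        omega
      subst hw1
      refine ⟨rfl, rfl, ?_⟩
      have : (n : ℚ) = 2 := by field_simp at h; push_cast at h; linarith
      exact_mod_cast this
  · right
    have hr2 : 1 / (r : ℚ) ≤ 1 / 2 := one_div_le_one_div_of_le two_pos (by exact_mod_cast hr)
    have hw0 : w = 0 := by
      by_contra hw0
      have : (1 : ℚ) ≤ w := by exact_mod_cast Nat.one_le_iff_ne_zero.mpr hw0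
      linarith
    subst hw0
    refine ⟨?_, hr, rfl⟩
    have : (r : ℚ)⁻¹ = (n : ℚ)⁻¹ := by simp only [div_eq_mul_inv] at h; linarith
    exact_mod_cast inv_inj.mp this

theorem exists_eq_sum_of_sum_lt_two {ι : Type} [Fintype ι] {f : ι → ℚ}
    (hf : ∀ i, f i = 0 ∨ 1 ≤ f i) (hpos : 0 < ∑ i, f i) (hlt : ∑ i, f i < 2) :
    ∃ i, f i = ∑ j, f j ∧ ∀ j, 0 < f j → j = i := by
  have hnn : ∀ i, 0 ≤ f i := fun i => (hf i).elim (·.ge) fun h => zero_le_one.trans h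
  obtain ⟨i, -, hi⟩ := Finset.exists_ne_zero_of_sum_ne_zero hpos.ne'
  have huniq : ∀ j, 0 < f j → j = i := by
    intro j hj
    by_contra hji
    have hpair := Finset.sum_le_sum_of_subset_of_nonneg (Finset.subset_univ {j, i})
      fun k _ _ => hnn k
    rw [Finset.sum_pair hji] at hpair
    have := (hf j).resolve_left hj.ne'
    have := (hf i).resolve_left hi
    linarith
  refine ⟨i, (Finset.sum_eq_single i (fun j _ hji => ?_) (by simp)).symm, huniq⟩
  exact (hf j).resolve_right fun h => hji (huniq j (zero_lt_one.trans_le h))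

end Arithmetic

section OrbitCounting

variable {Γ β : Type} [Group Γ]

theorem card_orbit_mul_card_fixing (ρ : Γ →* Equiv.Perm β) (H : Subgroup Γ) (b : β) :
    Nat.card {b' // ∃ γ ∈ H, ρ γ b = b'} * Nat.card {γ // γ ∈ H ∧ ρ γ b = b} =
      Nat.card H := by
  let := MulAction.compHom β (ρ.comp H.subtype)
  rw [← Nat.card_congr (MulAction.orbitProdStabilizerEquivGroup H b), Nat.card_prod]
  congr 1
  · exact Nat.card_congr (Equiv.subtypeEquivRight fun b' =>
      ⟨fun ⟨γ, hγ, h⟩ => ⟨⟨γ, hγ⟩, h⟩, fun ⟨γ, h⟩ => ⟨γ, γ.2, h⟩⟩)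
  · exact Nat.card_congr
      (Equiv.subtypeSubtypeEquivSubtypeInter (· ∈ H) fun γ => ρ γ b = b).symm

theorem card_orbit_of_free (ρ : Γ →* Equiv.Perm β) (H : Subgroup Γ) (b : β)
    (hfree : ∀ γ ∈ H, ρ γ b = b → γ = 1) :
    Nat.card {b' // ∃ γ ∈ H, ρ γ b = b'} = Nat.card H := by
  have : Unique {γ // γ ∈ H ∧ ρ γ b = b} :=
    ⟨⟨⟨1, H.one_mem, by simp⟩⟩, fun γ => Subtype.ext (hfree γ.1 γ.2.1 γ.2.2)⟩
  simpa using card_orbit_mul_card_fixing ρ H b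

theorem Setoid.sum_eq_sum_quotient {M : Type} [AddCommMonoid M] [Fintype β] (s : Setoid β)
    [Fintype (Quotient s)] (f : β → M) (hf : ∀ a b, s a b → f a = f b) :
    ∑ b, f b = ∑ y : Quotient s, Nat.card {b // s y.out b} • f y.out := by
  rw [← Fintype.sum_fiberwise (Quotient.mk s) f]
  refine Finset.sum_congr rfl fun y _ => ?_
  have hfib : ∀ b, Quotient.mk s b = y ↔ s y.out b := fun b => by
    rw [← Quotient.out_eq y, Quotient.eq, Quotient.out_eq]; exact ⟨Setoid.symm, Setoid.symm⟩
  rw [Finset.sum_congr rfl fun (b : {b // Quotient.mk s b = y}) _ => (hf _ _ ((hfib b).1 b.2)).symm,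
    Finset.sum_const, Finset.card_univ, ← Nat.card_eq_fintype_card,
    Nat.card_congr (Equiv.subtypeEquivRight hfib)]

theorem Setoid.card_eq_card_quotient_mul [Finite β] (s : Setoid β) (k : ℕ)
    (hk : ∀ b, Nat.card {b' // s b b'} = k) : Nat.card β = Nat.card (Quotient s) * k := by
  have := Fintype.ofFinite β
  have := Fintype.ofFinite (Quotient s)
  have := s.sum_eq_sum_quotient (fun _ => 1) fun _ _ _ => rfl
  simp only [Finset.sum_const, Finset.card_univ, smul_eq_mul, mul_one, hk] at this
  rw [Nat.card_eq_fintype_card, Nat.card_eq_fintype_card, this]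

end OrbitCounting

namespace Multigraph

variable (G : Multigraph)

theorem exists_ends_eq (e : G.E) : ∃ x y, G.ends e = s(x, y) :=
  Sym2.exists.mp ⟨_, rfl⟩

theorem exists_ends_eq_of_mem {e : G.E} {x : G.V} (h : x ∈ G.ends e) :
    ∃ y, x ≠ y ∧ G.ends e = s(x, y) := by
  obtain ⟨y, hy⟩ := Sym2.mem_iff_exists.mp h
  exact ⟨y, fun hxy => G.loopless e (by rw [hy, hxy]; exact Sym2.mk_isDiag_iff.mpr rfl), hy⟩

theorem forall_of_propagates (P : G.V → Prop)
    (hP : ∀ e x y, G.ends e = s(x, y) → P x → P y) {x : G.V} (hx : P x) (y : G.V) : P y := by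
  obtain ⟨p⟩ := G.connected.preconnected x y
  induction p with
  | nil => exact hx
  | cons hadj _ ih =>
    obtain ⟨-, ⟨e, he⟩ | ⟨e, he⟩⟩ := SimpleGraph.fromRel_adj _ _ _ |>.mp hadj
    · exact ih (hP e _ _ he hx)
    · exact ih (hP e _ _ (he.trans Sym2.eq_swap) hx)

theorem genus_nonneg : 0 ≤ G.genus := by
  have hV := G.connected.card_vert_le_card_edgeSet_add_one
  have hE : Nat.card (SimpleGraph.fromRel fun x y : G.V => ∃ e, G.ends e = s(x, y)).edgeSet ≤
      Nat.card G.E := by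
    refine (Nat.card_mono (Set.finite_range G.ends) ?_).trans (Finite.card_range_le G.ends)
    intro z hz
    induction z using Sym2.ind with | _ x y => ?_
    obtain ⟨-, ⟨e, he⟩ | ⟨e, he⟩⟩ := SimpleGraph.mem_edgeSet _ |>.mp hz
    · exact ⟨e, he⟩
    · exact ⟨e, he.trans Sym2.eq_swap⟩
  simp only [genus, ← Nat.card_eq_fintype_card]
  omega

theorem sum_card_incident (p : G.E → Prop) :
    ∑ x, Nat.card {e // x ∈ G.ends e ∧ p e} = 2 * Nat.card {e // p e} := by
  have hends : ∀ e, (Finset.univ.filter (· ∈ G.ends e)).card = 2 := fun e => by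
    rw [← Sym2.card_toFinset_of_not_isDiag _ (G.loopless e)]
    congr 1; ext; simp [Sym2.mem_toFinset]
  have := Finset.sum_card_bipartiteAbove_eq_sum_card_bipartiteBelow
    (s := Finset.univ) (t := Finset.univ.filter p) (fun x e => x ∈ G.ends e)
  simp only [Finset.bipartiteAbove, Finset.bipartiteBelow, Finset.filter_filter, hends,
    Finset.sum_const, smul_eq_mul] at this
  simp only [Nat.card_eq_fintype_card, Fintype.card_subtype, this, and_comm, mul_comm]

end Multigraph

namespace GraphAction

variable {Γ : Type} [Group Γ] {G : Multigraph}

theorem finite_group (A : GraphAction Γ G) : Finite Γ :=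
  Finite.of_injective (A.actV.prod A.actE) <| (injective_iff_map_eq_one _).mpr fun γ hγ =>
    A.faithful γ (Equiv.Perm.ext_iff.mp (congrArg Prod.fst hγ))
      (Equiv.Perm.ext_iff.mp (congrArg Prod.snd hγ))

variable {A : GraphAction Γ G}

theorem mem_ends_actE {γ : Γ} {x : G.V} {e : G.E} (h : x ∈ G.ends e) :
    A.actV γ x ∈ G.ends (A.actE γ e) := by
  rw [A.ends_map]; exact Sym2.mem_map.mpr ⟨x, h, rfl⟩

theorem actV_eq_self_of_actE_eq_self {γ : Γ} {e : G.E} {x y : G.V} (hends : G.ends e = s(x, y))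
    (he : A.actE γ e = e) (hx : A.actV γ x = x) : A.actV γ y = y := by
  have h := A.ends_map γ e
  rw [he, hends, Sym2.map_mk, hx] at h
  rcases Sym2.eq_iff.mp h.symm with ⟨-, h⟩ | ⟨rfl, h⟩ <;> exact h

theorem vertical_iff {Δ : Subgroup Γ} {e : G.E} {x y : G.V} (h : G.ends e = s(x, y)) :
    A.Vertical Δ e ↔ A.vrel Δ x y := by
  refine ⟨fun ⟨p, q, hpq, hrel⟩ => ?_, fun hrel => ⟨x, y, h, hrel⟩⟩
  rcases Sym2.eq_iff.mp (h.symm.trans hpq) with ⟨rfl, rfl⟩ | ⟨rfl, rfl⟩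
  · exact hrel
  · exact (A.vSetoid Δ).symm hrel

theorem vertical_actE {Δ : Subgroup Γ} {δ : Γ} (hδ : δ ∈ Δ) {e : G.E}
    (h : A.Vertical Δ e) : A.Vertical Δ (A.actE δ e) := by
  obtain ⟨p, q, hpq, δ', hδ', rfl⟩ := h
  refine ⟨A.actV δ p, A.actV δ (A.actV δ' p), by rw [A.ends_map, hpq, Sym2.map_mk], ?_⟩
  exact ⟨δ * δ' * δ⁻¹, Δ.mul_mem (Δ.mul_mem hδ hδ') (Δ.inv_mem hδ), by simp⟩

theorem vertical_actE_iff {Δ : Subgroup Γ} {δ : Γ} (hδ : δ ∈ Δ) {e : G.E} :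
    A.Vertical Δ (A.actE δ e) ↔ A.Vertical Δ e :=
  ⟨fun h => by simpa using vertical_actE (Δ.inv_mem hδ) h, vertical_actE hδ⟩

theorem not_vertical_of_fixed {Δ : Subgroup Γ} {u : G.V} (hu : ∀ δ ∈ Δ, A.actV δ u = u)
    {g : G.E} (hg : u ∈ G.ends g) : ¬ A.Vertical Δ g := by
  obtain ⟨z, hz, hends⟩ := G.exists_ends_eq_of_mem hg
  rintro hvert
  obtain ⟨δ, hδ, rfl⟩ := (vertical_iff hends).mp hvert
  exact hz (hu δ hδ).symm

theorem actE_eq_self_of_fixes_edge {Δ : Subgroup Γ} (hΔ : A.QuotHarmonic Δ) {u : G.V}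
    (hu : ∀ δ ∈ Δ, A.actV δ u = u) {f : G.E} (hf : u ∈ G.ends f)
    (hfix : ∀ δ ∈ Δ, A.actE δ f = f) {g : G.E} (hg : u ∈ G.ends g) {δ : Γ}
    (hδ : δ ∈ Δ) : A.actE δ g = g := by
  have hrefl : A.vrel Δ u u := (A.vSetoid Δ).refl u
  -- Since `Δ` fixes `f`, the `Δ`-orbit of `f` meets the edges at `u` only in `f`, so by
  -- harmonicity the same holds for `g`; but `δ g` lies in that orbit and is incident to `u`.
  have horbit_f : ∀ {h}, A.erel Δ h f → h = f := fun ⟨δ, hδ, hh⟩ => by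
    simpa [← hh] using hfix _ (Δ.inv_mem hδ)
  have hclass_f : Nat.card {h // u ∈ G.ends h ∧ A.erel Δ h f} = 1 :=
    Nat.card_eq_one_iff_unique.mpr
      ⟨⟨fun h₁ h₂ => Subtype.ext <| (horbit_f h₁.2.2).trans (horbit_f h₂.2.2).symm⟩,
        ⟨⟨f, hf, (A.eSetoid Δ).refl f⟩⟩⟩
  have harm := hΔ u g f (not_vertical_of_fixed hu hg) (not_vertical_of_fixed hu hf)
    ⟨u, hg, hrefl⟩ ⟨u, hf, hrefl⟩
  have hsub := (Nat.card_eq_one_iff_unique.mp (harm.trans hclass_f)).1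
  have hδg : u ∈ G.ends (A.actE δ g) := hu δ hδ ▸ mem_ends_actE hg
  exact congrArg Subtype.val <| hsub.elim ⟨A.actE δ g, hδg, δ⁻¹, Δ.inv_mem hδ, by simp⟩
    ⟨g, hg, (A.eSetoid Δ).refl g⟩

theorem eq_one_of_fixes_of_quotHarmonic {Δ : Subgroup Γ} (hΔ : A.QuotHarmonic Δ) {x : G.V}
    {e : G.E} (hxe : x ∈ G.ends e) (hx : ∀ δ ∈ Δ, A.actV δ x = x)
    (he : ∀ δ ∈ Δ, A.actE δ e = e) {δ : Γ} (hδ : δ ∈ Δ) : δ = 1 := by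
  let P (u : G.V) : Prop :=
    (∀ δ ∈ Δ, A.actV δ u = u) ∧ ∃ f, u ∈ G.ends f ∧ ∀ δ ∈ Δ, A.actE δ f = f
  have hstep (g : G.E) (u u' : G.V) (hg : G.ends g = s(u, u')) (hu : P u) : P u' := by
    obtain ⟨hu, f, hf, hfix⟩ := hu
    have hgfix : ∀ δ ∈ Δ, A.actE δ g = g := fun δ hδ =>
      actE_eq_self_of_fixes_edge hΔ hu hf hfix (hg ▸ Sym2.mem_mk_left u u') hδ
    exact ⟨fun δ hδ => actV_eq_self_of_actE_eq_self hg (hgfix δ hδ) (hu δ hδ), g,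
      hg ▸ Sym2.mem_mk_right u u', hgfix⟩
  have hP := G.forall_of_propagates P hstep ⟨hx, e, hxe, he⟩
  refine A.faithful δ (fun v => (hP v).1 δ hδ) fun g => ?_
  obtain ⟨hu, f, hf, hfix⟩ := hP (G.ends g).out.1
  exact actE_eq_self_of_fixes_edge hΔ hu hf hfix (Sym2.out_fst_mem _) hδ

theorem eq_one_of_fixes (hA : ∀ Δ, A.QuotHarmonic Δ) {γ : Γ} {x : G.V} {e : G.E}
    (hxe : x ∈ G.ends e) (hx : A.actV γ x = x) (he : A.actE γ e = e) : γ = 1 := by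
  refine eq_one_of_fixes_of_quotHarmonic (hA (Subgroup.zpowers γ)) hxe ?_ ?_
    (Subgroup.mem_zpowers γ)
  · rintro _ ⟨k, rfl⟩
    simpa using Equiv.Perm.zpow_apply_eq_self_of_apply_eq_self hx k
  · rintro _ ⟨k, rfl⟩
    simpa using Equiv.Perm.zpow_apply_eq_self_of_apply_eq_self he k

theorem card_vrel_mul_stabOrder (Δ : Subgroup Γ) (x : G.V) :
    Nat.card {y // A.vrel Δ x y} * A.stabOrder Δ x = Nat.card Δ :=
  card_orbit_mul_card_fixing A.actV Δ x

theorem card_eq_card_quotient_mul_of_free (Δ : Subgroup Γ) (p : G.E → Prop)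
    (hp : ∀ δ ∈ Δ, ∀ e, p e → p (A.actE δ e))
    (hfree : ∀ δ ∈ Δ, ∀ e, p e → A.actE δ e = e → δ = 1) :
    Nat.card {e // p e} =
      Nat.card (Quotient ((A.eSetoid Δ).comap (Subtype.val : {e // p e} → G.E))) *
        Nat.card Δ :=
  Setoid.card_eq_card_quotient_mul _ _ fun e =>
    (Nat.card_congr <|
      Equiv.subtypeSubtypeEquivSubtype fun ⟨δ, hδ, h⟩ => h ▸ hp δ hδ _ e.2).trans
        (card_orbit_of_free A.actE Δ e.1 fun δ hδ => hfree δ hδ _ e.2)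

theorem card_not_vertical (hA : ∀ Δ, A.QuotHarmonic Δ) (Δ : Subgroup Γ) :
    Nat.card {e // ¬ A.Vertical Δ e} = Nat.card (A.quotE Δ) * Nat.card Δ := by
  refine card_eq_card_quotient_mul_of_free Δ _
    (fun δ hδ e he => (vertical_actE_iff hδ).not.mpr he) fun δ hδ e he hfix => ?_
  obtain ⟨p, q, hpq⟩ := G.exists_ends_eq e
  have h := A.ends_map δ e
  rw [hfix, hpq, Sym2.map_mk] at h
  rcases Sym2.eq_iff.mp h.symm with ⟨hp, -⟩ | ⟨hq, -⟩
  · exact eq_one_of_fixes hA (hpq ▸ Sym2.mem_mk_left p q) hp hfix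
  · exact absurd ((vertical_iff hpq).mpr ⟨δ, hδ, hq⟩) he

theorem stabOrder_dvd_vertMult (hA : ∀ Δ, A.QuotHarmonic Δ) (Δ : Subgroup Γ) (x : G.V) :
    A.stabOrder Δ x ∣ A.vertMult Δ x := by
  let Δx : Subgroup Γ := Δ ⊓ (MulAction.stabilizer (Equiv.Perm G.V) x).comap A.actV
  have hΔx : Nat.card Δx = A.stabOrder Δ x :=
    Nat.card_congr (Equiv.subtypeEquivRight fun _ => Iff.rfl)
  rw [← hΔx]
  refine Dvd.intro_left _ (card_eq_card_quotient_mul_of_free (A := A) Δx _ ?_ ?_).symm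
  · exact fun δ ⟨hδ, hδx⟩ e ⟨hxe, he⟩ =>
      ⟨hδx ▸ mem_ends_actE hxe, vertical_actE hδ he⟩
  · exact fun δ ⟨_, hδx⟩ e ⟨hxe, _⟩ hfix => eq_one_of_fixes hA hxe hδx hfix

theorem mem_ends_actE_iff {γ : Γ} {x : G.V} {e : G.E} :
    A.actV γ x ∈ G.ends (A.actE γ e) ↔ x ∈ G.ends e :=
  ⟨fun h => by simpa using mem_ends_actE (A := A) (γ := γ⁻¹) h, mem_ends_actE⟩

theorem vertMult_eq_of_vrel {Δ : Subgroup Γ} {x y : G.V} (h : A.vrel Δ x y) :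
    A.vertMult Δ x = A.vertMult Δ y := by
  obtain ⟨δ, hδ, rfl⟩ := h
  exact Nat.card_congr <| (A.actE δ).subtypeEquiv fun e =>
    and_congr mem_ends_actE_iff.symm (vertical_actE_iff hδ).symm

section QuotientGraph

variable (A)

theorem mk_actV {Δ : Subgroup Γ} {δ : Γ} (hδ : δ ∈ Δ) (x : G.V) :
    (⟦A.actV δ x⟧ : A.quotV Δ) = ⟦x⟧ :=
  Quotient.sound ((A.vSetoid Δ).symm ⟨δ, hδ, rfl⟩)

def quotEnds (Δ : Subgroup Γ) : A.quotE Δ → Sym2 (A.quotV Δ) :=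
  Quotient.lift (fun e => (G.ends e.1).map (Quotient.mk _)) fun _ _ ⟨δ, hδ, hef⟩ => by
    rw [← hef, A.ends_map, Sym2.map_map]
    exact congrArg (Sym2.map · _) (funext fun x => (A.mk_actV hδ x).symm)

noncomputable def quotientGraph (Δ : Subgroup Γ) : Multigraph where
  V := A.quotV Δ
  E := A.quotE Δ
  ends := A.quotEnds Δ
  loopless := by
    rintro ⟨e, he⟩
    obtain ⟨x, y, hxy⟩ := G.exists_ends_eq e
    show ¬ ((G.ends e).map _).IsDiag
    rw [hxy, Sym2.map_mk, Sym2.mk_isDiag_iff, Quotient.eq]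
    exact (vertical_iff hxy).not.mp he
  connected := by
    obtain ⟨root⟩ := G.connected.nonempty
    have hreach := G.forall_of_propagates
      (fun u => (SimpleGraph.fromRel fun a b => ∃ e, A.quotEnds Δ e = s(a, b)).Reachable
        ⟦root⟧ ⟦u⟧) (fun e u u' hends hu => ?_) (SimpleGraph.Reachable.refl _)
    · exact (SimpleGraph.connected_iff_exists_forall_reachable _).mpr
        ⟨⟦root⟧, Quotient.ind hreach⟩
    by_cases he : A.Vertical Δ e
    · have huu' : (⟦u⟧ : A.quotV Δ) = ⟦u'⟧ := Quotient.sound ((vertical_iff hends).mp he)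
      rwa [← huu']
    · refine hu.trans (SimpleGraph.Adj.reachable ?_)
      rw [SimpleGraph.fromRel_adj]
      refine ⟨fun h => he ((vertical_iff hends).mpr (Quotient.exact h)),
        Or.inl ⟨⟦⟨e, he⟩⟧, ?_⟩⟩
      show (G.ends e).map _ = _
      rw [hends, Sym2.map_mk]

theorem genus_quotientGraph (Δ : Subgroup Γ) : (A.quotientGraph Δ).genus = A.quotGenus Δ := by
  simp only [Multigraph.genus, quotGenus, Nat.card_eq_fintype_card]
  rfl

end QuotientGraph

variable (A) in
noncomputable def ramTerm (Δ : Subgroup Γ) (y : A.quotV Δ) : ℚ :=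
  2 * (1 - 1 / (A.r Δ y : ℚ)) + (A.w Δ y : ℚ)

theorem ram_eq_sum (Δ : Subgroup Γ) : A.ram Δ = ∑ y, A.ramTerm Δ y :=
  finsum_eq_sum_of_fintype _

theorem card_mul_ramTerm (hA : ∀ Δ, A.QuotHarmonic Δ) (Δ : Subgroup Γ) (y : A.quotV Δ) :
    (Nat.card Δ : ℚ) * A.ramTerm Δ y =
      2 * Nat.card Δ - 2 * Nat.card {x // A.vrel Δ y.out x} +
        Nat.card {x // A.vrel Δ y.out x} * A.vertMult Δ y.out := by
  have := A.finite_group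
  have : Nonempty {γ // γ ∈ Δ ∧ A.actV γ y.out = y.out} :=
    ⟨⟨1, Δ.one_mem, by simp⟩⟩
  have hs : 0 < A.stabOrder Δ y.out := Nat.card_pos
  rw [ramTerm, w, r, Nat.cast_div (stabOrder_dvd_vertMult hA Δ y.out) (by positivity),
    ← card_vrel_mul_stabOrder Δ y.out]
  push_cast
  field_simp

theorem riemann_hurwitz (hA : ∀ Δ, A.QuotHarmonic Δ) (Δ : Subgroup Γ) :
    2 * (G.genus : ℚ) - 2 = Nat.card Δ * (2 * (A.quotGenus Δ : ℚ) - 2 + A.ram Δ) := by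
  have hV : Fintype.card G.V = ∑ y : A.quotV Δ, Nat.card {x // A.vrel Δ y.out x} := by
    have := (A.vSetoid Δ).sum_eq_sum_quotient (fun _ => (1 : ℕ)) fun _ _ _ => rfl
    simp only [Finset.sum_const, Finset.card_univ, smul_eq_mul, mul_one] at this
    exact this
  have hvert : ∑ y : A.quotV Δ, Nat.card {x // A.vrel Δ y.out x} * A.vertMult Δ y.out =
      2 * Nat.card {e // A.Vertical Δ e} := by
    rw [← G.sum_card_incident]
    exact ((A.vSetoid Δ).sum_eq_sum_quotient _ fun _ _ => vertMult_eq_of_vrel).symm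
  have hE : Fintype.card G.E =
      Nat.card {e // A.Vertical Δ e} + Nat.card (A.quotE Δ) * Nat.card Δ := by
    rw [← card_not_vertical hA Δ, ← Nat.card_sum, ← Nat.card_eq_fintype_card]
    exact Nat.card_congr (Equiv.sumCompl _).symm
  have hsum : (Nat.card Δ : ℚ) * A.ram Δ =
      2 * Nat.card Δ * Nat.card (A.quotV Δ) - 2 * Fintype.card G.V +
        2 * Nat.card {e // A.Vertical Δ e} := by
    have hV' : (Fintype.card G.V : ℚ) =
        ∑ y : A.quotV Δ, (Nat.card {x // A.vrel Δ y.out x} : ℚ) := by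
      exact_mod_cast hV
    have hvert' : ∑ y : A.quotV Δ,
        (Nat.card {x // A.vrel Δ y.out x} : ℚ) * A.vertMult Δ y.out =
        2 * Nat.card {e // A.Vertical Δ e} := by
      exact_mod_cast hvert
    rw [ram_eq_sum, Finset.mul_sum, Finset.sum_congr rfl fun y _ => card_mul_ramTerm hA Δ y,
      Finset.sum_add_distrib, Finset.sum_sub_distrib, Finset.sum_const, Finset.card_univ,
      ← Finset.mul_sum, hvert', hV', nsmul_eq_mul, ← Nat.card_eq_fintype_card]
    ring
  simp only [Multigraph.genus, quotGenus, mul_add, hsum]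
  push_cast [hE]
  ring

theorem ramTerm_eq_zero_or_one_le (Δ : Subgroup Γ) (y : A.quotV Δ) :
    A.ramTerm Δ y = 0 ∨ 1 ≤ A.ramTerm Δ y :=
  two_mul_one_sub_one_div_add_eq_zero_or_one_le _ _

theorem ram_nonneg (Δ : Subgroup Γ) : 0 ≤ A.ram Δ :=
  ram_eq_sum Δ ▸ Finset.sum_nonneg fun y _ =>
    (ramTerm_eq_zero_or_one_le Δ y).elim (·.ge) zero_le_one.trans

theorem ram_eq_of_genus_eq_zero (hA : ∀ Δ, A.QuotHarmonic Δ) (hG : G.genus = 0)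
    (Δ : Subgroup Γ) : A.ram Δ = 2 - 2 / Nat.card Δ := by
  have := A.finite_group
  have hn : (0 : ℚ) < Nat.card Δ := by exact_mod_cast Nat.card_pos
  have hRH := riemann_hurwitz hA Δ
  rw [hG, Int.cast_zero] at hRH
  -- `G/Δ` is again a tree: a quotient genus `≥ 1` would make the right-hand side nonnegative.
  have hg' : A.quotGenus Δ = 0 := by
    have h0 := genus_quotientGraph A Δ ▸ (A.quotientGraph Δ).genus_nonneg
    by_contra hne
    have : (1 : ℚ) ≤ A.quotGenus Δ := by exact_mod_cast (by omega : 1 ≤ A.quotGenus Δ)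
    nlinarith [ram_nonneg (A := A) Δ]
  rw [hg'] at hRH
  field_simp
  push_cast at hRH
  linarith

end GraphAction

/-- If a nontrivial group `Γ` acts harmonically on a tree `T`
(genus 0), then `0 < R < 2`, `|Γ| = 2/(2 − R)`, and there is exactly one branch point
`y`, with either `r_y = w_y = 1` (so `|Γ| = 2`), or `r_y = |Γ| ≥ 2` and `w_y = 0`. -/
theorem tree_harmonic_action {Γ : Type} [Group Γ] [Nontrivial Γ] {T : Multigraph}
    (A : GraphAction Γ T) (hA : A.ActsHarmonically) (hT : T.genus = 0) :
    0 < A.ram ⊤ ∧ A.ram ⊤ < 2 ∧ (Nat.card Γ : ℚ) = 2 / (2 - A.ram ⊤) ∧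
    (∃! y : A.quotV ⊤, A.IsBranch ⊤ y) ∧
    ∀ y : A.quotV ⊤, A.IsBranch ⊤ y →
      (A.r ⊤ y = 1 ∧ A.w ⊤ y = 1 ∧ Nat.card Γ = 2) ∨
      (A.r ⊤ y = Nat.card Γ ∧ 2 ≤ A.r ⊤ y ∧ A.w ⊤ y = 0) := by
  have := A.finite_group
  have hn : 2 ≤ Nat.card Γ := Finite.one_lt_card
  have hR : A.ram ⊤ = 2 - 2 / Nat.card Γ := by
    simpa using GraphAction.ram_eq_of_genus_eq_zero (fun Δ => (hA Δ).1) hT ⊤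
  have h2n : 0 < 2 / (Nat.card Γ : ℚ) ∧ 2 / (Nat.card Γ : ℚ) ≤ 1 :=
    ⟨by positivity, (div_le_one (by positivity)).mpr (by exact_mod_cast hn)⟩
  rw [GraphAction.ram_eq_sum] at hR ⊢
  obtain ⟨y, hyR, huniq⟩ := exists_eq_sum_of_sum_lt_two
    (GraphAction.ramTerm_eq_zero_or_one_le ⊤) (by linarith) (by linarith)
  refine ⟨by linarith, by linarith, by rw [hR]; field_simp; ring, ⟨y, ?_, huniq⟩,
    fun y' hy' => ?_⟩
  · show 0 < A.ramTerm ⊤ y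
    linarith
  · obtain rfl := huniq y' hy'
    exact eq_of_two_mul_one_sub_one_div_add_eq_two_sub_two_div hn (hyR.trans hR)
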